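/- Every regular tetrahedron with vertices in ℤ³ can be completed to a cube with all eight vertices in ℤ³: there exist four additional points in ℤ³ such that the eight points are the vertices of a cube and the tetrahedron's vertices are four of them (no two adjacent along an edge of the cube). -/

import Mathlib

open Matrix

/-- Casting a vector of integers to a point of `ℝ³` (with the Euclidean structure). -/
noncomputable def intVec (v : Fin 3 → ℤ) : EuclideanSpace ℝ (Fin 3) :=
  (WithLp.equiv 2 (Fin 3 → ℝ)).symm fun i => (v i : ℝ)

/-!
Put `a = A - O`, `b = B - O`, `c = C - O`. Regularity means `a ⬝ a = b ⬝ b = c ⬝ c = 2m` and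
`a ⬝ b = a ⬝ c = b ⬝ c = m`, and then `(a + b - c) / 2`, `(a - b + c) / 2`, `(-a + b + c) / 2` are
pairwise orthogonal of squared length `m`: they are the edges of the cube. They are integral
because `|a + b - c|² = 4m`, and a vector of `ℤ³` whose squared length is divisible by 4 has even
coordinates, squares being 0 or 1 mod 4.
-/

lemma dist_intVec_sq (v w : Fin 3 → ℤ) :
    dist (intVec v) (intVec w) ^ 2 = (((v - w) ⬝ᵥ (v - w) : ℤ) : ℝ) := by
  rw [EuclideanSpace.dist_eq, Real.sq_sqrt (by positivity)]
  simp [intVec, dotProduct, Fin.sum_univ_three, Real.dist_eq, sq]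

lemma dist_intVec_eq_dist_intVec_iff {v w x y : Fin 3 → ℤ} :
    dist (intVec v) (intVec w) = dist (intVec x) (intVec y) ↔
      (v - w) ⬝ᵥ (v - w) = (x - y) ⬝ᵥ (x - y) := by
  rw [← sq_eq_sq₀ dist_nonneg dist_nonneg, dist_intVec_sq, dist_intVec_sq, Int.cast_inj]

lemma Int.even_of_four_dvd_sq_add_sq_add_sq {x y z : ℤ} (h : 4 ∣ x ^ 2 + y ^ 2 + z ^ 2) :
    Even x ∧ Even y ∧ Even z := by
  have sq_mod_four (t : ℤ) : Even t ∧ t ^ 2 % 4 = 0 ∨ ¬Even t ∧ t ^ 2 % 4 = 1 := by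
    rcases Int.even_or_odd t with ht | ht
    · obtain ⟨s, rfl⟩ := ht
      exact .inl ⟨⟨s, rfl⟩, by ring_nf; omega⟩
    · exact .inr ⟨Int.not_even_iff_odd.2 ht, Int.sq_mod_four_eq_one_of_odd ht⟩
  rcases sq_mod_four x with ⟨hx, hx'⟩ | ⟨hx, hx'⟩ <;>
  rcases sq_mod_four y with ⟨hy, hy'⟩ | ⟨hy, hy'⟩ <;>
  rcases sq_mod_four z with ⟨hz, hz'⟩ | ⟨hz, hz'⟩ <;>
  first | exact ⟨hx, hy, hz⟩ | omega

lemma exists_two_smul_eq_of_four_dvd_dotProduct_self {x : Fin 3 → ℤ} (h : 4 ∣ x ⬝ᵥ x) :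
    ∃ y, x = 2 • y := by
  rw [dotProduct, Fin.sum_univ_three, ← sq, ← sq, ← sq] at h
  obtain ⟨⟨y₀, h₀⟩, ⟨y₁, h₁⟩, ⟨y₂, h₂⟩⟩ := Int.even_of_four_dvd_sq_add_sq_add_sq h
  refine ⟨![y₀, y₁, y₂], funext fun i => ?_⟩
  fin_cases i <;> simp [h₀, h₁, h₂, two_mul]

section

variable {n R : Type*} [Fintype n] [CommRing R] {a b c : n → R}

lemma dotProducts_of_regular_tetrahedron [NoZeroDivisors R] [CharZero R]
    (h₁ : a ⬝ᵥ a = b ⬝ᵥ b) (h₂ : b ⬝ᵥ b = c ⬝ᵥ c) (h₃ : c ⬝ᵥ c = (a - b) ⬝ᵥ (a - b))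
    (h₄ : (a - b) ⬝ᵥ (a - b) = (a - c) ⬝ᵥ (a - c)) (h₅ : (a - c) ⬝ᵥ (a - c) = (b - c) ⬝ᵥ (b - c)) :
    a ⬝ᵥ a = 2 * (a ⬝ᵥ b) ∧ b ⬝ᵥ b = 2 * (a ⬝ᵥ b) ∧ c ⬝ᵥ c = 2 * (a ⬝ᵥ b) ∧
      a ⬝ᵥ c = a ⬝ᵥ b ∧ b ⬝ᵥ c = a ⬝ᵥ b := by
  simp only [sub_dotProduct, dotProduct_sub, dotProduct_comm b a, dotProduct_comm c a,
    dotProduct_comm c b] at h₃ h₄ h₅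
  refine ⟨?_, ?_, ?_, mul_left_cancel₀ two_ne_zero ?_, mul_left_cancel₀ two_ne_zero ?_⟩
  · linear_combination -h₃ - h₂
  · linear_combination -h₃ - h₂ - h₁
  · linear_combination -h₃ - 2 * h₂ - h₁
  · linear_combination h₄ - h₂
  · linear_combination h₅ - h₁ + h₄ - h₂

lemma dotProduct_self_add_sub_of_regular {m : R} (ha : a ⬝ᵥ a = 2 * m) (hb : b ⬝ᵥ b = 2 * m)
    (hc : c ⬝ᵥ c = 2 * m) (hab : a ⬝ᵥ b = m) (hac : a ⬝ᵥ c = m) (hbc : b ⬝ᵥ c = m) :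
    (a + b - c) ⬝ᵥ (a + b - c) = 4 * m := by
  simp only [add_dotProduct, dotProduct_add, sub_dotProduct, dotProduct_sub, dotProduct_comm b a,
    dotProduct_comm c a, dotProduct_comm c b, ha, hb, hc, hab, hac, hbc]
  ring

lemma cube_of_regular_tetrahedron [NoZeroDivisors R] [CharZero R] {m : R} {u : n → R}
    (ha : a ⬝ᵥ a = 2 * m) (hb : b ⬝ᵥ b = 2 * m) (hc : c ⬝ᵥ c = 2 * m)
    (hab : a ⬝ᵥ b = m) (hac : a ⬝ᵥ c = m) (hbc : b ⬝ᵥ c = m) (hu : 2 • u = a + b - c) :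
    u ⬝ᵥ (a - u) = 0 ∧ u ⬝ᵥ (b - u) = 0 ∧ (a - u) ⬝ᵥ (b - u) = 0 ∧
      u ⬝ᵥ u = m ∧ (a - u) ⬝ᵥ (a - u) = m ∧ (b - u) ⬝ᵥ (b - u) = m := by
  have hua : 2 • (a - u) = a - b + c := by rw [smul_sub, hu, two_smul]; abel
  have hub : 2 • (b - u) = b - a + c := by rw [smul_sub, hu, two_smul]; abel
  have four_mul (v w : n → R) : 4 * (v ⬝ᵥ w) = (2 • v) ⬝ᵥ (2 • w) := by
    rw [smul_dotProduct, dotProduct_smul, smul_smul, nsmul_eq_mul]; norm_num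
  refine ⟨?_, ?_, ?_, ?_, ?_, ?_⟩ <;> refine mul_left_cancel₀ (by norm_num : (4 : R) ≠ 0) ?_ <;>
    rw [four_mul] <;>
    simp only [hu, hua, hub, add_dotProduct, dotProduct_add, sub_dotProduct, dotProduct_sub,
      dotProduct_comm b a, dotProduct_comm c a, dotProduct_comm c b, ha, hb, hc, hab, hac, hbc] <;>
    ring

end

theorem tetrahedron_completes_to_cube_general (O A B C : Fin 3 → ℤ)
    (hOA : O ≠ A)
    (h1 : dist (intVec O) (intVec A) = dist (intVec O) (intVec B))
    (h2 : dist (intVec O) (intVec B) = dist (intVec O) (intVec C))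
    (h3 : dist (intVec O) (intVec C) = dist (intVec A) (intVec B))
    (h4 : dist (intVec A) (intVec B) = dist (intVec A) (intVec C))
    (h5 : dist (intVec A) (intVec C) = dist (intVec B) (intVec C)) :
    ∃ v u₁ u₂ u₃ : Fin 3 → ℤ,
      u₁ ⬝ᵥ u₂ = 0 ∧ u₁ ⬝ᵥ u₃ = 0 ∧ u₂ ⬝ᵥ u₃ = 0 ∧
      u₁ ⬝ᵥ u₁ = u₂ ⬝ᵥ u₂ ∧ u₂ ⬝ᵥ u₂ = u₃ ⬝ᵥ u₃ ∧ u₁ ≠ 0 ∧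
      O = v ∧ A = v + u₁ + u₂ ∧ B = v + u₁ + u₃ ∧ C = v + u₂ + u₃ := by
  obtain ⟨a, rfl⟩ : ∃ a, A = O + a := ⟨A - O, by abel⟩
  obtain ⟨b, rfl⟩ : ∃ b, B = O + b := ⟨B - O, by abel⟩
  obtain ⟨c, rfl⟩ : ∃ c, C = O + c := ⟨C - O, by abel⟩
  simp only [dist_intVec_eq_dist_intVec_iff, sub_add_cancel_left, add_sub_add_left_eq_sub,
    neg_dotProduct, dotProduct_neg, neg_neg] at h1 h2 h3 h4 h5
  obtain ⟨ha, hb, hc, hac, hbc⟩ := dotProducts_of_regular_tetrahedron h1 h2 h3 h4 h5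
  obtain ⟨u, hu⟩ := exists_two_smul_eq_of_four_dvd_dotProduct_self
    ⟨_, dotProduct_self_add_sub_of_regular ha hb hc rfl hac hbc⟩
  obtain ⟨h₁₂, h₁₃, h₂₃, h₁, h₂, h₃⟩ :=
    cube_of_regular_tetrahedron ha hb hc rfl hac hbc hu.symm
  refine ⟨O, u, a - u, b - u, h₁₂, h₁₃, h₂₃, h₁.trans h₂.symm, h₂.trans h₃.symm, ?_, rfl,
    by abel, by abel, ?_⟩
  · rintro rfl
    rw [zero_dotProduct, eq_comm, ← mul_eq_zero_iff_left two_ne_zero, ← ha,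
      dotProduct_self_eq_zero] at h₁
    exact hOA (by simp [h₁])
  · rw [show c = a + b - 2 • u by rw [← hu]; abel]
    abel

/-- Every regular tetrahedron with vertices in `ℤ³` can be completed to a cube with all
eight vertices in `ℤ³`: there is a cube (base vertex `v ∈ ℤ³` and pairwise orthogonal
nonzero integer edge vectors `u₁, u₂, u₃` of equal norm) whose even-parity corners
`v, v+u₁+u₂, v+u₁+u₃, v+u₂+u₃` (no two adjacent along an edge) are exactly the vertices
of the tetrahedron. -/
theorem tetrahedron_completes_to_cube (O A B C : Fin 3 → ℤ)
    (hOA : O ≠ A) (hOB : O ≠ B) (hOC : O ≠ C) (hAB : A ≠ B) (hAC : A ≠ C) (hBC : B ≠ C)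
    (h1 : dist (intVec O) (intVec A) = dist (intVec O) (intVec B))
    (h2 : dist (intVec O) (intVec B) = dist (intVec O) (intVec C))
    (h3 : dist (intVec O) (intVec C) = dist (intVec A) (intVec B))
    (h4 : dist (intVec A) (intVec B) = dist (intVec A) (intVec C))
    (h5 : dist (intVec A) (intVec C) = dist (intVec B) (intVec C)) :
    ∃ v u₁ u₂ u₃ : Fin 3 → ℤ,
      u₁ ⬝ᵥ u₂ = 0 ∧ u₁ ⬝ᵥ u₃ = 0 ∧ u₂ ⬝ᵥ u₃ = 0 ∧
      u₁ ⬝ᵥ u₁ = u₂ ⬝ᵥ u₂ ∧ u₂ ⬝ᵥ u₂ = u₃ ⬝ᵥ u₃ ∧ u₁ ≠ 0 ∧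
      O = v ∧ A = v + u₁ + u₂ ∧ B = v + u₁ + u₃ ∧ C = v + u₂ + u₃ :=
  tetrahedron_completes_to_cube_general O A B C hOA h1 h2 h3 h4 h5
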